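/- For unit vectors |ψ₀⟩, |ψ₁⟩ in a finite-dimensional Hilbert space, the normalized superposition |φ⟩ = (|ψ₀⟩+|ψ₁⟩)/‖|ψ₀⟩+|ψ₁⟩‖ satisfies |⟨ψ_b|φ⟩|² = (1 + Re⟨ψ₀|ψ₁⟩)/2 for b ∈ {0,1}. In particular, for the protocol states |ψ₀⟩, |ψ₁⟩ with ⟨ψ₀|ψ₁⟩ = cos²(α/2), this equals (1/2)(1 + cos²(α/2)). -/

import Mathlib

/-!
Since `⟪x, y⟫ = c` is real, `⟪x, x + y⟫ = ⟪y, x + y⟫ = 1 + c` while `‖x + y‖² = 2 (1 + c)`, so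
both overlaps equal `(1 + c)² / (2 (1 + c)) = (1 + c) / 2`.
-/

open scoped InnerProductSpace

section

open RCLike

variable {𝕜 E : Type*} [RCLike 𝕜] [NormedAddCommGroup E] [InnerProductSpace 𝕜 E]

theorem norm_inner_inv_norm_smul_right_sq [Module ℝ E] [IsScalarTower ℝ 𝕜 E] (v w : E) :
    ‖⟪v, (‖w‖⁻¹ : ℝ) • w⟫_𝕜‖ ^ 2 = ‖⟪v, w⟫_𝕜‖ ^ 2 / ‖w‖ ^ 2 := by
  rw [inner_smul_right_eq_smul, norm_smul, Real.norm_eq_abs, mul_pow, sq_abs, inv_pow,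
    inv_mul_eq_div]

theorem norm_add_sq_of_norm_eq_one {x y : E} (hx : ‖x‖ = 1) (hy : ‖y‖ = 1) :
    ‖x + y‖ ^ 2 = 2 * (1 + re ⟪x, y⟫_𝕜) := by
  rw [@norm_add_sq 𝕜, hx, hy]
  ring

theorem norm_inner_self_add_sq_of_im_eq_zero {x y : E} (hx : ‖x‖ = 1)
    (hreal : im ⟪x, y⟫_𝕜 = 0) : ‖⟪x, x + y⟫_𝕜‖ ^ 2 = (1 + re ⟪x, y⟫_𝕜) ^ 2 := by
  rw [inner_add_right, inner_self_eq_one_of_norm_eq_one hx, norm_sq_eq_def]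
  simp [hreal, sq]

theorem norm_inner_normalized_add_sq_left [Module ℝ E] [IsScalarTower ℝ 𝕜 E] {x y : E}
    (hx : ‖x‖ = 1) (hy : ‖y‖ = 1)     (hreal : im ⟪x, y⟫_𝕜 = 0) :
    ‖⟪x, (‖x + y‖⁻¹ : ℝ) • (x + y)⟫_𝕜‖ ^ 2 = (1 + re ⟪x, y⟫_𝕜) / 2 := by
  rw [norm_inner_inv_norm_smul_right_sq (𝕜 := 𝕜),
    norm_inner_self_add_sq_of_im_eq_zero hx hreal,
    norm_add_sq_of_norm_eq_one (𝕜 := 𝕜) hx hy]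
  -- when `1 + re ⟪x, y⟫_𝕜 = 0` both sides vanish, the left one through `0 / 0 = 0`
  rcases eq_or_ne (1 + re ⟪x, y⟫_𝕜) 0 with h | h
  · simp [h]
  · field_simp

theorem norm_inner_normalized_add_sq_right [Module ℝ E] [IsScalarTower ℝ 𝕜 E] {x y : E}
    (hx : ‖x‖ = 1) (hy : ‖y‖ = 1)     (hreal : im ⟪x, y⟫_𝕜 = 0) :
    ‖⟪y, (‖x + y‖⁻¹ : ℝ) • (x + y)⟫_𝕜‖ ^ 2 = (1 + re ⟪x, y⟫_𝕜) / 2 := by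
  rw [add_comm x y, inner_re_symm,
    norm_inner_normalized_add_sq_left hy hx (by rw [inner_im_symm, hreal, neg_zero])]

end

theorem superposition_overlap {n : Type*} [Fintype n]
    (ψ : Fin 2 → EuclideanSpace ℂ n)
    (hunit : ∀ b, ‖ψ b‖ = 1)
    (hreal : (⟪ψ 0, ψ 1⟫_ℂ).im = 0) :
    (∀ b : Fin 2,
        ‖⟪ψ b, (‖ψ 0 + ψ 1‖⁻¹ : ℝ) • (ψ 0 + ψ 1)⟫_ℂ‖ ^ 2 =
          (1 + (⟪ψ 0, ψ 1⟫_ℂ).re) / 2) ∧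
    (∀ α : ℝ, α ∈ Set.Icc 0 Real.pi → ⟪ψ 0, ψ 1⟫_ℂ = (Real.cos (α / 2) : ℂ) ^ 2 →
      ∀ b : Fin 2,
        ‖⟪ψ b, (‖ψ 0 + ψ 1‖⁻¹ : ℝ) • (ψ 0 + ψ 1)⟫_ℂ‖ ^ 2 =
          (1 / 2) * (1 + Real.cos (α / 2) ^ 2)) := by
  have overlap : ∀ b : Fin 2,
      ‖⟪ψ b, (‖ψ 0 + ψ 1‖⁻¹ : ℝ) • (ψ 0 + ψ 1)⟫_ℂ‖ ^ 2 = (1 + (⟪ψ 0, ψ 1⟫_ℂ).re) / 2 := by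
    intro b
    fin_cases b
    · exact norm_inner_normalized_add_sq_left (hunit 0) (hunit 1) hreal
    · exact norm_inner_normalized_add_sq_right (hunit 0) (hunit 1) hreal
  refine ⟨overlap, fun α _ hcos b => ?_⟩
  rw [overlap b, hcos, ← Complex.ofReal_pow, Complex.ofReal_re]
  ring
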